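/- arXiv:2602.02855 — 5 statements merged into one kernel-verified Lean document; each statement's English description precedes it below -/
import Mathlib

section
/- Let A, B ∈ ℝ with A ≠ 0, and set λ₊ = (B + √(B² + 4A²))/2. Then λ₊ > 0, and for the linear dynamical system u̇ = B·u + A·m, ṁ = A·u the following exit-time asymptotics holds: fix any R > 0 and any unit vector v ∈ ℝ² that is not orthogonal to the vector (λ₊, A); for ε > 0 let (u_ε, m_ε) : [0,∞) → ℝ² be the solution with initial condition (u_ε(0), m_ε(0)) = ε·v, and define T(ε) := inf{ t ≥ 0 : u_ε(t)² + m_ε(t)² ≥ R² }. Then lim_{ε→0⁺} T(ε)/log(1/ε) = 1/λ₊ = (−B + √(B² + 4A²))/(2A²). -/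
/-!
For `z = (u, m)` the system reads `ż = M z` with `M = [[B, A], [A, 0]]` symmetric; its eigenvectors
`(λ, A)` and `(B - λ, A)` are orthogonal, with eigenvalues `λ > 0 > B - λ`. The components of `z`
along them evolve like `exp (λ t)` and `exp ((B - λ) t)`, so by Pythagoras
`‖P z(0)‖² e^{2λt} ≤ ‖z(t)‖² ≤ ‖z(0)‖² e^{2λt}`, where `P` projects onto the line through `(λ, A)`.
At the exit time `‖z(T)‖ = R` by the intermediate value theorem, and `z(0) = ε v`, so
`λ T - log (1/ε)` stays bounded as `ε → 0⁺`, whence `T / log (1/ε) → 1/λ`.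
-/

open Real Filter Set Topology

noncomputable def exitTime (F : ℝ → ℝ) (r : ℝ) : ℝ :=
  sInf {t | 0 ≤ t ∧ r ≤ F t}

theorem exitTime_nonneg (F : ℝ → ℝ) (r : ℝ) : 0 ≤ exitTime F r :=
  Real.sInf_nonneg fun _ h => h.1

theorem ContinuousOn.apply_exitTime {F : ℝ → ℝ} {r : ℝ} (hF : ContinuousOn F (Ici 0))
    (h0 : F 0 ≤ r) (hex : ∃ t ≥ 0, r ≤ F t) : F (exitTime F r) = r := by
  have hbdd : BddBelow {t | 0 ≤ t ∧ r ≤ F t} := ⟨0, fun _ h => h.1⟩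
  have hmem : exitTime F r ∈ {t | 0 ≤ t ∧ r ≤ F t} :=
    (hF.preimage_isClosed_of_isClosed isClosed_Ici isClosed_Ici).csInf_mem hex hbdd
  obtain ⟨t, ht, hFt⟩ :=
    intermediate_value_Icc hmem.1 (hF.mono Icc_subset_Ici_self) ⟨h0, hmem.2⟩
  have hle : exitTime F r ≤ t := csInf_le hbdd ⟨ht.1, hFt.ge⟩
  rwa [le_antisymm ht.2 hle] at hFt

theorem eq_mul_exp_of_hasDerivAt {f : ℝ → ℝ} {l t : ℝ}
    (hf : ∀ s ≥ 0, HasDerivAt f (l * f s) s) (ht : 0 ≤ t) : f t = f 0 * exp (l * t) := by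
  have hderiv : ∀ s ≥ 0, HasDerivAt (fun s => f s * exp (-(l * s))) 0 s := fun s hs =>
    ((hf s hs).mul ((hasDerivAt_id s).const_mul l).neg.exp).congr_deriv (by simp; ring)
  have hconst := constant_of_has_deriv_right_zero
    (fun s hs => (hderiv s hs.1).continuousAt.continuousWithinAt)
    (fun s hs => (hderiv s hs.1).hasDerivWithinAt) t ⟨ht, le_rfl⟩
  simp only [mul_zero, neg_zero, exp_zero, mul_one, exp_neg] at hconst
  rw [← hconst]
  field_simp

theorem tendsto_div_of_mul_sub_mem_Icc {α : Type*} {l : Filter α} {f L : α → ℝ} {c K₁ K₂ : ℝ}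
    (hc : 0 < c) (hL : Tendsto L l atTop) (h : ∀ᶠ x in l, c * f x - L x ∈ Icc K₁ K₂) :
    Tendsto (fun x => f x / L x) l (𝓝 (1 / c)) := by
  have hlim : ∀ K : ℝ, Tendsto (fun x => (K / L x + 1) / c) l (𝓝 (1 / c)) := fun K => by
    simpa using ((tendsto_const_nhds.div_atTop hL).add_const 1).div_const c
  have hrepr : ∀ᶠ x in l, f x / L x = ((c * f x - L x) / L x + 1) / c := by
    filter_upwards [hL.eventually_gt_atTop 0] with x hx
    field_simp
    ring
  refine tendsto_of_tendsto_of_tendsto_of_le_of_le' (hlim K₁) (hlim K₂) ?_ ?_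
  · filter_upwards [h, hrepr, hL.eventually_gt_atTop 0] with x hx hfx hLx
    rw [hfx]; gcongr; exact hx.1
  · filter_upwards [h, hrepr, hL.eventually_gt_atTop 0] with x hx hfx hLx
    rw [hfx]; gcongr; exact hx.2

theorem tendsto_log_one_div_nhdsGT_zero : Tendsto (fun ε : ℝ => log (1 / ε)) (𝓝[>] 0) atTop := by
  simpa only [one_div, Function.comp_def] using tendsto_log_atTop.comp tendsto_inv_nhdsGT_zero

theorem mem_Icc_of_mul_exp_sq_bounds {K₁ K₂ r D : ℝ} (hK₁ : 0 < K₁) (hK₂ : 0 < K₂) (hr : 0 < r)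
    (h₁ : K₁ * exp D ^ 2 ≤ r) (h₂ : r ≤ K₂ * exp D ^ 2) :
    D ∈ Icc (log (r / K₂) / 2) (log (r / K₁) / 2) := by
  have hlog : log (exp D ^ 2) = 2 * D := by rw [log_pow, log_exp]; norm_num
  constructor
  · have : r / K₂ ≤ exp D ^ 2 := (div_le_iff₀' hK₂).mpr h₂
    linarith [log_le_log (by positivity) this]
  · have : exp D ^ 2 ≤ r / K₁ := (le_div_iff₀' hK₁).mpr h₁
    linarith [log_le_log (by positivity) this]

/-- The squared length of the orthogonal projection of `(x, y)` onto the line through `(a, b)`. -/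
noncomputable def sqNormProj (a b x y : ℝ) : ℝ := (a * x + b * y) ^ 2 / (a ^ 2 + b ^ 2)

theorem sqNormProj_mul (a b c x y : ℝ) :
    sqNormProj a b (c * x) (c * y) = c ^ 2 * sqNormProj a b x y := by
  unfold sqNormProj; ring

theorem sqNormProj_nonneg (a b x y : ℝ) : 0 ≤ sqNormProj a b x y := by
  unfold sqNormProj; positivity

theorem sq_add_sq_pos_of_mul_add_mul_ne_zero {a b x y : ℝ} (h : a * x + b * y ≠ 0) :
    0 < x ^ 2 + y ^ 2 := by
  rcases ne_or_eq x 0 with hx | rfl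
  · positivity
  · have hy : y ≠ 0 := by rintro rfl; simp at h
    positivity

theorem sqNormProj_pos {a b x y : ℝ} (h : a * x + b * y ≠ 0) : 0 < sqNormProj a b x y := by
  have hab : 0 < a ^ 2 + b ^ 2 :=
    sq_add_sq_pos_of_mul_add_mul_ne_zero (a := x) (b := y) fun h' => h (by linear_combination h')
  exact div_pos (by positivity) hab

theorem sq_add_sq_eq_sqNormProj_add_sqNormProj {a b a' b' : ℝ} (hab : a ^ 2 + b ^ 2 ≠ 0)
    (hab' : a' ^ 2 + b' ^ 2 ≠ 0) (horth : a * a' + b * b' = 0) (x y : ℝ) :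
    x ^ 2 + y ^ 2 = sqNormProj a b x y + sqNormProj a' b' x y := by
  unfold sqNormProj
  field_simp
  linear_combination (-(a * a' - b * b') * (x ^ 2 - y ^ 2) - 2 * (a * b' + a' * b) * x * y) * horth

section LinearSystem

variable {A B l : ℝ} {u m : ℝ → ℝ}

theorem eigencoord_eq_mul_exp (hl : l ^ 2 = B * l + A ^ 2)
    (hu : ∀ t ≥ 0, HasDerivAt u (B * u t + A * m t) t) (hm : ∀ t ≥ 0, HasDerivAt m (A * u t) t)
    {t : ℝ} (ht : 0 ≤ t) : l * u t + A * m t = (l * u 0 + A * m 0) * exp (l * t) :=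
  eq_mul_exp_of_hasDerivAt (f := fun s => l * u s + A * m s) (fun s hs =>
    (((hu s hs).const_mul l).add ((hm s hs).const_mul A)).congr_deriv
      (by linear_combination -(u s) * hl)) ht

theorem sqNormProj_eq_mul_exp_sq (hl : l ^ 2 = B * l + A ^ 2)
    (hu : ∀ t ≥ 0, HasDerivAt u (B * u t + A * m t) t) (hm : ∀ t ≥ 0, HasDerivAt m (A * u t) t)
    {t : ℝ} (ht : 0 ≤ t) :
    sqNormProj l A (u t) (m t) = sqNormProj l A (u 0) (m 0) * exp (l * t) ^ 2 := by
  unfold sqNormProj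
  rw [eigencoord_eq_mul_exp hl hu hm ht]
  ring

theorem sq_add_sq_bounds (hA : A ≠ 0) (hl : l ^ 2 = B * l + A ^ 2) (hl0 : 0 < l)
    (hu : ∀ t ≥ 0, HasDerivAt u (B * u t + A * m t) t) (hm : ∀ t ≥ 0, HasDerivAt m (A * u t) t)
    {t : ℝ} (ht : 0 ≤ t) :
    sqNormProj l A (u 0) (m 0) * exp (l * t) ^ 2 ≤ u t ^ 2 + m t ^ 2 ∧
      u t ^ 2 + m t ^ 2 ≤ (u 0 ^ 2 + m 0 ^ 2) * exp (l * t) ^ 2 := by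
  have hl' : (B - l) ^ 2 = B * (B - l) + A ^ 2 := by linear_combination hl
  have horth : l * (B - l) + A * A = 0 := by linear_combination -hl
  have hpyth := sq_add_sq_eq_sqNormProj_add_sqNormProj (by positivity) (by positivity) horth
  have hexp : exp ((B - l) * t) ^ 2 ≤ exp (l * t) ^ 2 := by
    have : B - l < l := by nlinarith [sq_pos_of_ne_zero hA]
    gcongr
  rw [hpyth (u t), hpyth (u 0), sqNormProj_eq_mul_exp_sq hl hu hm ht,
    sqNormProj_eq_mul_exp_sq (l := B - l) hl' hu hm ht]
  have hμ := sqNormProj_nonneg (B - l) A (u 0) (m 0)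
  constructor
  · nlinarith [sq_nonneg (exp ((B - l) * t))]
  · nlinarith

theorem exitTime_bounds (hA : A ≠ 0) (hl : l ^ 2 = B * l + A ^ 2) (hl0 : 0 < l)
    (hu : ∀ t ≥ 0, HasDerivAt u (B * u t + A * m t) t) (hm : ∀ t ≥ 0, HasDerivAt m (A * u t) t)
    {r : ℝ} (h0 : u 0 ^ 2 + m 0 ^ 2 ≤ r) (hP : 0 < sqNormProj l A (u 0) (m 0)) :
    sqNormProj l A (u 0) (m 0) * exp (l * exitTime (fun t => u t ^ 2 + m t ^ 2) r) ^ 2 ≤ r ∧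
      r ≤ (u 0 ^ 2 + m 0 ^ 2) * exp (l * exitTime (fun t => u t ^ 2 + m t ^ 2) r) ^ 2 := by
  have hcont : ContinuousOn (fun t => u t ^ 2 + m t ^ 2) (Ici 0) := fun t ht =>
    (((hu t ht).continuousAt.pow 2).add ((hm t ht).continuousAt.pow 2)).continuousWithinAt
  have hgrowth : Tendsto (fun t => sqNormProj l A (u 0) (m 0) * exp (l * t) ^ 2) atTop atTop :=
    ((tendsto_pow_atTop two_ne_zero).comp
      (tendsto_exp_atTop.comp (tendsto_id.const_mul_atTop hl0))).const_mul_atTop hP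
  have hex : ∃ t ≥ 0, r ≤ u t ^ 2 + m t ^ 2 := by
    obtain ⟨t, ht, hrt⟩ := ((eventually_ge_atTop 0).and (hgrowth.eventually_ge_atTop r)).exists
    exact ⟨t, ht, hrt.trans (sq_add_sq_bounds hA hl hl0 hu hm ht).1⟩
  have hexit := hcont.apply_exitTime h0 hex
  obtain ⟨hlow, hup⟩ := sq_add_sq_bounds hA hl hl0 hu hm (exitTime_nonneg _ r)
  rw [hexit] at hlow hup
  exact ⟨hlow, hup⟩

theorem mul_exitTime_sub_log_mem_Icc (hA : A ≠ 0) (hl : l ^ 2 = B * l + A ^ 2) (hl0 : 0 < l)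
    (hu : ∀ t ≥ 0, HasDerivAt u (B * u t + A * m t) t) (hm : ∀ t ≥ 0, HasDerivAt m (A * u t) t)
    {ε x y r : ℝ} (hε : 0 < ε) (hu0 : u 0 = ε * x) (hm0 : m 0 = ε * y) (hxy : l * x + A * y ≠ 0)
    (hr : ε ^ 2 * (x ^ 2 + y ^ 2) ≤ r) (hr0 : 0 < r) :
    l * exitTime (fun t => u t ^ 2 + m t ^ 2) r - log (1 / ε) ∈
      Icc (log (r / (x ^ 2 + y ^ 2)) / 2) (log (r / sqNormProj l A x y) / 2) := by
  have hnorm : u 0 ^ 2 + m 0 ^ 2 = ε ^ 2 * (x ^ 2 + y ^ 2) := by rw [hu0, hm0]; ring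
  have hcomp : sqNormProj l A (u 0) (m 0) = ε ^ 2 * sqNormProj l A x y := by
    rw [hu0, hm0, sqNormProj_mul]
  obtain ⟨hlow, hup⟩ := exitTime_bounds hA hl hl0 hu hm (hnorm ▸ hr)
    (hcomp ▸ mul_pos (by positivity) (sqNormProj_pos hxy))
  have hD : exp (l * exitTime (fun t => u t ^ 2 + m t ^ 2) r - log (1 / ε)) =
      ε * exp (l * exitTime (fun t => u t ^ 2 + m t ^ 2) r) := by
    rw [exp_sub, exp_log (by positivity)]
    field_simp
  rw [hcomp] at hlow
  rw [hnorm] at hup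
  apply mem_Icc_of_mul_exp_sq_bounds (sqNormProj_pos hxy)
    (sq_add_sq_pos_of_mul_add_mul_ne_zero hxy) hr0 <;> rw [hD]
  · linear_combination hlow
  · linear_combination hup

end LinearSystem

theorem sq_eq_mul_add_sq_of_eq_add_sqrt {A B l : ℝ}
    (hl : l = (B + sqrt (B ^ 2 + 4 * A ^ 2)) / 2) : l ^ 2 = B * l + A ^ 2 := by
  rw [hl]
  linear_combination sq_sqrt (by positivity : 0 ≤ B ^ 2 + 4 * A ^ 2) / 4

theorem pos_of_eq_add_sqrt {A B l : ℝ} (hA : A ≠ 0)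
    (hl : l = (B + sqrt (B ^ 2 + 4 * A ^ 2)) / 2) : 0 < l := by
  have : |B| < sqrt (B ^ 2 + 4 * A ^ 2) := by
    rw [← sqrt_sq_eq_abs]
    exact sqrt_lt_sqrt (sq_nonneg B) (by linarith [sq_pos_of_ne_zero hA])
  rw [hl]
  linarith [neg_abs_le B]

theorem stmt0_general (A B : ℝ) (hA : A ≠ 0)
    (lam : ℝ) (hlam : lam = (B + Real.sqrt (B ^ 2 + 4 * A ^ 2)) / 2)
    (R : ℝ) (hR : 0 < R)
    (v : ℝ × ℝ)
    (hvo : v.1 * lam + v.2 * A ≠ 0)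
    (u m : ℝ → ℝ → ℝ)
    (hu : ∀ ε > (0 : ℝ), ∀ t ≥ (0 : ℝ), HasDerivAt (u ε) (B * u ε t + A * m ε t) t)
    (hm : ∀ ε > (0 : ℝ), ∀ t ≥ (0 : ℝ), HasDerivAt (m ε) (A * u ε t) t)
    (h0 : ∀ ε > (0 : ℝ), u ε 0 = ε * v.1 ∧ m ε 0 = ε * v.2)
    (T : ℝ → ℝ)
    (hT : ∀ ε > (0 : ℝ),
      T ε = sInf {t : ℝ | 0 ≤ t ∧ R ^ 2 ≤ (u ε t) ^ 2 + (m ε t) ^ 2}) :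
    0 < lam ∧
    (1 / lam = (-B + Real.sqrt (B ^ 2 + 4 * A ^ 2)) / (2 * A ^ 2)) ∧
    Filter.Tendsto (fun ε => T ε / Real.log (1 / ε))
      (nhdsWithin 0 (Set.Ioi 0)) (nhds (1 / lam)) := by
  have hchar := sq_eq_mul_add_sq_of_eq_add_sqrt hlam
  have hlam0 := pos_of_eq_add_sqrt hA hlam
  refine ⟨hlam0, ?_, ?_⟩
  · rw [div_eq_div_iff hlam0.ne' (by positivity)]
    linear_combination 2 * lam * hlam - 2 * hchar
  have hv : lam * v.1 + A * v.2 ≠ 0 := by rwa [mul_comm lam, mul_comm A]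
  have hsmall : ∀ᶠ ε in 𝓝[>] (0 : ℝ), ε ^ 2 * (v.1 ^ 2 + v.2 ^ 2) ≤ R ^ 2 := by
    have hcont : Continuous fun ε : ℝ => ε ^ 2 * (v.1 ^ 2 + v.2 ^ 2) := by fun_prop
    exact ((hcont.tendsto' 0 0 (by simp)).mono_left nhdsWithin_le_nhds).eventually_le_const
      (by positivity)
  apply tendsto_div_of_mul_sub_mem_Icc hlam0 tendsto_log_one_div_nhdsGT_zero
  filter_upwards [self_mem_nhdsWithin, hsmall] with ε (hε : 0 < ε) hεR
  rw [hT ε hε]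
  exact mul_exitTime_sub_log_mem_Icc hA hchar hlam0 (hu ε hε) (hm ε hε) hε (h0 ε hε).1
    (h0 ε hε).2 hv hεR (by positivity)

/-- Exit-time asymptotics for the linearized LoRA search-phase dynamics
`u̇ = B·u + A·m`, `ṁ = A·u`: starting from `ε·v` with `v` a unit vector not
orthogonal to the unstable eigenvector `(λ₊, A)`, the exit time from the ball
of radius `R` satisfies `T(ε)/log(1/ε) → 1/λ₊ = (−B + √(B² + 4A²))/(2A²)`
as `ε → 0⁺`, and `λ₊ > 0`. -/
theorem stmt0 (A B : ℝ) (hA : A ≠ 0)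
    (lam : ℝ) (hlam : lam = (B + Real.sqrt (B ^ 2 + 4 * A ^ 2)) / 2)
    (R : ℝ) (hR : 0 < R)
    (v : ℝ × ℝ) (hv : v.1 ^ 2 + v.2 ^ 2 = 1)
    (hvo : v.1 * lam + v.2 * A ≠ 0)
    (u m : ℝ → ℝ → ℝ)
    (hu : ∀ ε > (0 : ℝ), ∀ t ≥ (0 : ℝ), HasDerivAt (u ε) (B * u ε t + A * m ε t) t)
    (hm : ∀ ε > (0 : ℝ), ∀ t ≥ (0 : ℝ), HasDerivAt (m ε) (A * u ε t) t)
    (h0 : ∀ ε > (0 : ℝ), u ε 0 = ε * v.1 ∧ m ε 0 = ε * v.2)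
    (T : ℝ → ℝ)
    (hT : ∀ ε > (0 : ℝ),
      T ε = sInf {t : ℝ | 0 ≤ t ∧ R ^ 2 ≤ (u ε t) ^ 2 + (m ε t) ^ 2}) :
    0 < lam ∧
    (1 / lam = (-B + Real.sqrt (B ^ 2 + 4 * A ^ 2)) / (2 * A ^ 2)) ∧
    Filter.Tendsto (fun ε => T ε / Real.log (1 / ε))
      (nhdsWithin 0 (Set.Ioi 0)) (nhds (1 / lam)) :=
  stmt0_general A B hA lam hlam R hR v hvo u m hu hm h0 T hT
end

section
/- Let k = 2p+1 with an integer p ≥ 1 (so k ≥ 3 is odd), and let A : (0,1) → ℝ be the drift coefficient defined in the context. Then there exists μ̃ ∈ (0,1) such that A(μ̃) = 0. -/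
/-!
For odd `k = 2p+1` every term of `f(k,μ)` carries the factor `μ^{2(k-2m)}` with `k - 2m ≥ 1`,
so `A(μ) = -μ G(μ)` for a polynomial `G` (`AcoefDivNeg`). Only the term `m = p` survives in
`G(0)`, and it is positive, so `A < 0` just to the right of `0`. At `μ² = 1 - 1/k` the prefactor
`1 + k(μ²-1)/(2m) = 1 - 1/(2m)` is nonnegative while `(μ²-1)^{2m-1} < 0`, so `f ≤ 0` there and
`A > 0`. The intermediate value theorem gives the zero.
-/

open Finset in
/-- The auxiliary function `f(k,μ)` appearing in the drift coefficients of the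
linearized LoRA search-phase dynamics for a pure Hermite activation `He_k`. -/
noncomputable def fAux (k : ℕ) (μ : ℝ) : ℝ :=
  ∑ m ∈ Finset.Icc 1 (k / 2),
    (1 + (k : ℝ) * (μ ^ 2 - 1) / (2 * (m : ℝ))) * μ ^ (2 * (k - 2 * m)) *
      (μ ^ 2 - 1) ^ (2 * m - 1) /
      (((k - 2 * m).factorial : ℝ) * (m.factorial : ℝ) * ((m - 1).factorial : ℝ) *
        (2 : ℝ) ^ (2 * m - 1))

/-- The rescaled drift coefficient `A(μ)` of the linearized dynamics. -/
noncomputable def Acoef (k : ℕ) (μ : ℝ) : ℝ :=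
  -(μ ^ (k - 1) * (μ ^ k - 1) + ((k.factorial : ℝ) / (k : ℝ)) * μ⁻¹ * fAux k μ)

/-- The rescaled drift coefficient `B(μ)` of the linearized dynamics. -/
noncomputable def Bcoef (k : ℕ) (μ : ℝ) : ℝ :=
  -(μ ^ (2 * k - 2) + ((k.factorial : ℝ) / (k : ℝ)) * (μ ^ 2)⁻¹ * fAux k μ)

/-- The characteristic escape-time prefactor `τ(μ)`. -/
noncomputable def tauCoef (k : ℕ) (μ : ℝ) : ℝ :=
  (-(Bcoef k μ) + Real.sqrt ((Bcoef k μ) ^ 2 + 4 * (Acoef k μ) ^ 2)) /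
    (2 * (Acoef k μ) ^ 2)

open Filter Topology

noncomputable def fAuxDivSq (k : ℕ) (μ : ℝ) : ℝ :=
  ∑ m ∈ Finset.Icc 1 (k / 2),
    (1 + (k : ℝ) * (μ ^ 2 - 1) / (2 * (m : ℝ))) * μ ^ (2 * (k - 2 * m - 1)) *
      (μ ^ 2 - 1) ^ (2 * m - 1) /
      (((k - 2 * m).factorial : ℝ) * (m.factorial : ℝ) * ((m - 1).factorial : ℝ) *
        (2 : ℝ) ^ (2 * m - 1))

noncomputable def AcoefDivNeg (k : ℕ) (μ : ℝ) : ℝ :=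
  μ ^ (k - 2) * (μ ^ k - 1) + ((k.factorial : ℝ) / k) * fAuxDivSq k μ

lemma fAux_odd_eq_sq_mul (p : ℕ) (μ : ℝ) :
    fAux (2 * p + 1) μ = μ ^ 2 * fAuxDivSq (2 * p + 1) μ := by
  rw [fAux, fAuxDivSq, Finset.mul_sum]
  refine Finset.sum_congr rfl fun m hm => ?_
  have hm := (Finset.mem_Icc.mp hm).2
  rw [show 2 * (2 * p + 1 - 2 * m) = 2 + 2 * (2 * p + 1 - 2 * m - 1) by omega, pow_add]
  ring

lemma Acoef_odd_eq (p : ℕ) (hp : 1 ≤ p) (μ : ℝ) :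
    Acoef (2 * p + 1) μ = -(μ * AcoefDivNeg (2 * p + 1) μ) := by
  rcases eq_or_ne μ 0 with rfl | hμ
  · simp [Acoef, show p ≠ 0 by omega]
  · rw [Acoef, fAux_odd_eq_sq_mul, AcoefDivNeg,
      show 2 * p + 1 - 1 = (2 * p + 1 - 2) + 1 by omega, pow_succ]
    field_simp

lemma continuous_AcoefDivNeg (k : ℕ) : Continuous (AcoefDivNeg k) := by
  unfold AcoefDivNeg fAuxDivSq
  fun_prop

lemma continuous_Acoef_odd (p : ℕ) (hp : 1 ≤ p) : Continuous (Acoef (2 * p + 1)) := by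
  rw [funext (Acoef_odd_eq p hp)]
  have := continuous_AcoefDivNeg (2 * p + 1)
  fun_prop

lemma fAuxDivSq_odd_zero (p : ℕ) (hp : 1 ≤ p) :
    fAuxDivSq (2 * p + 1) 0 =
      1 / (2 * p * (p.factorial : ℝ) * ((p - 1).factorial : ℝ) * 2 ^ (2 * p - 1)) := by
  have hp_mem : p ∈ Finset.Icc 1 ((2 * p + 1) / 2) := Finset.mem_Icc.mpr ⟨hp, by omega⟩
  rw [fAuxDivSq, Finset.sum_eq_single_of_mem p hp_mem fun m hm hmp => by
    have hm := (Finset.mem_Icc.mp hm).2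
    simp [zero_pow (show 2 * (2 * p + 1 - 2 * m - 1) ≠ 0 by omega)]]
  rw [show 2 * p + 1 - 2 * p = 1 by omega, show (0 : ℝ) ^ 2 - 1 = -1 by norm_num,
    Odd.neg_one_pow ⟨p - 1, by omega⟩]
  have : (p : ℝ) ≠ 0 := by positivity
  push_cast [Nat.factorial_one, Nat.sub_self, pow_zero]
  field_simp
  ring

lemma AcoefDivNeg_odd_zero_pos (p : ℕ) (hp : 1 ≤ p) : 0 < AcoefDivNeg (2 * p + 1) 0 := by
  rw [AcoefDivNeg, fAuxDivSq_odd_zero p hp, zero_pow (by omega), zero_mul, zero_add]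
  have : (0 : ℝ) < p := by exact_mod_cast hp
  positivity

lemma Acoef_odd_neg_nhdsGT_zero (p : ℕ) (hp : 1 ≤ p) :
    ∀ᶠ μ in 𝓝[>] 0, Acoef (2 * p + 1) μ < 0 := by
  have hG : ∀ᶠ μ in 𝓝 (0 : ℝ), 0 < AcoefDivNeg (2 * p + 1) μ :=
    (continuous_AcoefDivNeg _).continuousAt.eventually
      (lt_mem_nhds (AcoefDivNeg_odd_zero_pos p hp))
  filter_upwards [nhdsWithin_le_nhds hG, self_mem_nhdsWithin] with μ hGμ hμ
  rw [Acoef_odd_eq p hp]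
  exact neg_neg_of_pos (mul_pos hμ hGμ)

lemma fAux_nonpos_of_sq_eq (k : ℕ) (μ : ℝ) (hμ : μ ^ 2 = 1 - 1 / k) : fAux k μ ≤ 0 := by
  refine Finset.sum_nonpos fun m hm => ?_
  obtain ⟨hm1, hmk⟩ := Finset.mem_Icc.mp hm
  have hk : (k : ℝ) ≠ 0 := by norm_cast; omega
  have hm0 : (1 : ℝ) ≤ m := by exact_mod_cast hm1
  have hcoef : 1 + k * (μ ^ 2 - 1) / (2 * m) = 1 - 1 / (2 * (m : ℝ)) := by
    rw [hμ]; field_simp; ring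
  have hcoef_nonneg : 0 ≤ 1 - 1 / (2 * (m : ℝ)) := by
    rw [sub_nonneg, div_le_one (by positivity)]; linarith
  have hbase : μ ^ 2 - 1 ≤ 0 := by
    rw [hμ, sub_sub_cancel_left, neg_nonpos]; positivity
  refine div_nonpos_of_nonpos_of_nonneg (mul_nonpos_of_nonneg_of_nonpos ?_ ?_) (by positivity)
  · rw [hcoef]; exact mul_nonneg hcoef_nonneg ((even_two_mul _).pow_nonneg μ)
  · exact Odd.pow_nonpos ⟨m - 1, by omega⟩ hbase

lemma Acoef_pos_of_fAux_nonpos (k : ℕ) (hk : 1 ≤ k) (μ : ℝ) (hμ₀ : 0 < μ) (hμ₁ : μ < 1)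
    (hf : fAux k μ ≤ 0) : 0 < Acoef k μ := by
  have hfirst : μ ^ (k - 1) * (μ ^ k - 1) < 0 :=
    mul_neg_of_pos_of_neg (by positivity) (sub_neg.mpr (pow_lt_one₀ hμ₀.le hμ₁ (by omega)))
  have hsecond : (k.factorial : ℝ) / k * μ⁻¹ * fAux k μ ≤ 0 :=
    mul_nonpos_of_nonneg_of_nonpos (by positivity) hf
  rw [Acoef]
  linarith

lemma exists_Acoef_pos (k : ℕ) (hk : 2 ≤ k) : ∃ μ ∈ Set.Ioo (0 : ℝ) 1, 0 < Acoef k μ := by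
  have hk' : (1 : ℝ) < k := by exact_mod_cast hk
  have hsq_pos : 0 < 1 - 1 / (k : ℝ) := by rw [sub_pos, div_lt_one (by linarith)]; exact hk'
  set μ := Real.sqrt (1 - 1 / (k : ℝ))
  have hμsq : μ ^ 2 = 1 - 1 / k := Real.sq_sqrt hsq_pos.le
  have hμ₀ : 0 < μ := Real.sqrt_pos.mpr hsq_pos
  have hμ₁ : μ < 1 := by nlinarith [one_div_pos.mpr (zero_lt_one.trans hk')]
  exact ⟨μ, ⟨hμ₀, hμ₁⟩,
    Acoef_pos_of_fAux_nonpos k (by omega) μ hμ₀ hμ₁ (fAux_nonpos_of_sq_eq k μ hμsq)⟩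

/-- For an odd pure Hermite activation of degree `k = 2p+1 ≥ 3`, there exists a
pre-training alignment `μ̃ ∈ (0,1)` at which the drift coefficient `A`
vanishes, so that escape from the correlated search phase fails. -/
theorem stmt2 (p : ℕ) (hp : 1 ≤ p) :
    ∃ μ ∈ Set.Ioo (0 : ℝ) 1, Acoef (2 * p + 1) μ = 0 := by
  obtain ⟨μ₁, ⟨hμ₁0, hμ₁1⟩, hA₁⟩ := exists_Acoef_pos (2 * p + 1) (by omega)
  obtain ⟨μ₀, hA₀, hμ₀0, hμ₀1⟩ :=
    ((Acoef_odd_neg_nhdsGT_zero p hp).and (Ioo_mem_nhdsGT hμ₁0)).exists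
  obtain ⟨μ, hμ, hAμ⟩ := intermediate_value_Icc hμ₀1.le (continuous_Acoef_odd p hp).continuousOn
    ⟨hA₀.le, hA₁.le⟩
  exact ⟨μ, ⟨hμ₀0.trans_le hμ.1, hμ.2.trans_lt hμ₁1⟩, hAμ⟩
end

section
/- Let k ≥ 3 be an integer and let τ : (0,1) → ℝ be the characteristic escape-time prefactor defined in the context (assumed well defined, i.e. A(μ) ≠ 0, for μ close to 1). Then lim_{μ→1⁻} (μ² − 1)² · τ(μ) = 4/(2k − 1)². -/
/-!
Every term of `f(k, μ)` carries a factor `μ² - 1`, so `A(μ) = (μ - 1) s(μ)` with `s`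
continuous at `1`. At `μ = 1` only the `m = 1` term of `f / (μ² - 1)` survives, giving
`s(1) = -(2k - 1)`, while `B(1) = -1`. Cancelling `(μ - 1)²`,
`(μ² - 1)² τ(μ) = (μ + 1)² (-B + √(B² + 4A²)) / (2 s²)` for `μ ≠ 1`, and the right side is
continuous at `1` with value `4 · 2 / (2 (2k - 1)²)`.
-/

noncomputable def fAuxCofactor (k : ℕ) (μ : ℝ) : ℝ :=
  ∑ m ∈ Finset.Icc 1 (k / 2),
    (1 + (k : ℝ) * (μ ^ 2 - 1) / (2 * (m : ℝ))) * μ ^ (2 * (k - 2 * m)) *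
      (μ ^ 2 - 1) ^ (2 * (m - 1)) /
      (((k - 2 * m).factorial : ℝ) * (m.factorial : ℝ) * ((m - 1).factorial : ℝ) *
        (2 : ℝ) ^ (2 * m - 1))

theorem fAux_eq_mul_fAuxCofactor (k : ℕ) (μ : ℝ) :
    fAux k μ = (μ ^ 2 - 1) * fAuxCofactor k μ := by
  rw [fAux, fAuxCofactor, Finset.mul_sum]
  refine Finset.sum_congr rfl fun m hm => ?_
  rw [show 2 * m - 1 = 2 * (m - 1) + 1 by grind, pow_succ]
  ring

theorem continuous_fAuxCofactor (k : ℕ) : Continuous (fAuxCofactor k) := by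
  unfold fAuxCofactor
  fun_prop

theorem continuous_fAux (k : ℕ) : Continuous (fAux k) := by
  unfold fAux
  fun_prop

theorem fAuxCofactor_one {k : ℕ} (hk : 2 ≤ k) :
    fAuxCofactor k 1 = 1 / (2 * ((k - 2).factorial : ℝ)) := by
  rw [fAuxCofactor, Finset.sum_eq_single 1]
  · norm_num
    ring
  · intro m hm hm1
    rw [Finset.mem_Icc] at hm
    simp [zero_pow (by omega : 2 * (m - 1) ≠ 0)]
  · intro h
    exact absurd (Finset.mem_Icc.mpr ⟨le_rfl, by omega⟩) h

noncomputable def AcoefCofactor (k : ℕ) (μ : ℝ) : ℝ :=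
  -(μ ^ (k - 1) * ∑ i ∈ Finset.range k, μ ^ i +
    ((k.factorial : ℝ) / (k : ℝ)) * μ⁻¹ * (μ + 1) * fAuxCofactor k μ)

theorem Acoef_eq_mul_AcoefCofactor (k : ℕ) (μ : ℝ) :
    Acoef k μ = (μ - 1) * AcoefCofactor k μ := by
  rw [Acoef, AcoefCofactor, fAux_eq_mul_fAuxCofactor, ← geom_sum_mul]
  ring

theorem continuousAt_AcoefCofactor_one (k : ℕ) : ContinuousAt (AcoefCofactor k) 1 := by
  unfold AcoefCofactor
  have := continuous_fAuxCofactor k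
  fun_prop (disch := norm_num)

theorem AcoefCofactor_one {k : ℕ} (hk : 2 ≤ k) :
    AcoefCofactor k 1 = -(2 * k - 1) := by
  have hfac : (k.factorial : ℝ) = k * (k - 1) * (k - 2).factorial := by
    obtain ⟨n, rfl⟩ := Nat.exists_eq_add_of_le hk
    simp only [add_comm 2 n, Nat.factorial_succ, Nat.cast_mul, Nat.cast_add, Nat.cast_one,
      Nat.cast_ofNat, add_tsub_cancel_right]
    ring
  have hk0 : (k : ℝ) ≠ 0 := by positivity
  rw [AcoefCofactor, fAuxCofactor_one hk, hfac]
  field_simp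
  simp only [one_pow, Finset.sum_const, Finset.card_range, nsmul_eq_mul, mul_one]
  ring

theorem continuousAt_Bcoef_one (k : ℕ) : ContinuousAt (Bcoef k) 1 := by
  unfold Bcoef
  have := continuous_fAux k
  fun_prop (disch := norm_num)

theorem Bcoef_one (k : ℕ) : Bcoef k 1 = -1 := by
  simp [Bcoef, fAux_eq_mul_fAuxCofactor]

theorem continuousAt_Acoef_one (k : ℕ) : ContinuousAt (Acoef k) 1 := by
  unfold Acoef
  have := continuous_fAux k
  fun_prop (disch := norm_num)

theorem Acoef_one (k : ℕ) : Acoef k 1 = 0 := by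
  simp [Acoef_eq_mul_AcoefCofactor]

theorem sq_sub_one_sq_mul_tauCoef (k : ℕ) {μ : ℝ} (hμ : μ ≠ 1) :
    (μ ^ 2 - 1) ^ 2 * tauCoef k μ =
      (μ + 1) ^ 2 * (-(Bcoef k μ) + √(Bcoef k μ ^ 2 + 4 * Acoef k μ ^ 2)) /
        (2 * AcoefCofactor k μ ^ 2) := by
  have hμ' : (μ - 1) ^ 2 ≠ 0 := pow_ne_zero 2 (sub_ne_zero.mpr hμ)
  have hA : 2 * Acoef k μ ^ 2 = (μ - 1) ^ 2 * (2 * AcoefCofactor k μ ^ 2) := by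
    rw [Acoef_eq_mul_AcoefCofactor]
    ring
  rw [tauCoef, hA, mul_div_assoc', show (μ ^ 2 - 1) ^ 2 = (μ - 1) ^ 2 * (μ + 1) ^ 2 by ring,
    mul_assoc, mul_div_mul_left _ _ hμ']

theorem stmt4_general (k : ℕ) (hk : 3 ≤ k) :
    Filter.Tendsto (fun μ : ℝ => (μ ^ 2 - 1) ^ 2 * tauCoef k μ)
      (nhdsWithin 1 (Set.Iio 1)) (nhds (4 / (2 * (k : ℝ) - 1) ^ 2)) := by
  set F : ℝ → ℝ := fun μ =>
    (μ + 1) ^ 2 * (-(Bcoef k μ) + √(Bcoef k μ ^ 2 + 4 * Acoef k μ ^ 2)) /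
      (2 * AcoefCofactor k μ ^ 2)
  have hslope : AcoefCofactor k 1 = -(2 * k - 1) := AcoefCofactor_one (by omega)
  have hslope_ne : AcoefCofactor k 1 ≠ 0 := by
    rw [hslope]
    have : (3 : ℝ) ≤ k := by exact_mod_cast hk
    linarith
  have hF : ContinuousAt F 1 := by
    have := continuousAt_Acoef_one k
    have := continuousAt_Bcoef_one k
    have := continuousAt_AcoefCofactor_one k
    fun_prop (disch := positivity)
  have hF1 : F 1 = 4 / (2 * k - 1) ^ 2 := by
    simp only [F, Acoef_one, Bcoef_one, hslope]
    norm_num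
    field_simp
    ring
  refine (hF1 ▸ hF.tendsto.mono_left nhdsWithin_le_nhds).congr' ?_
  filter_upwards [self_mem_nhdsWithin] with μ (hμ : μ < 1)
  exact (sq_sub_one_sq_mul_tauCoef k hμ.ne).symm

/-- Strong-alignment asymptotics of the escape-time prefactor for a pure
Hermite activation of degree `k ≥ 3`: `(μ² − 1)²·τ(μ) → 4/(2k − 1)²` as
`μ → 1⁻`. -/
theorem stmt4 (k : ℕ) (hk : 3 ≤ k)
    (hA : ∀ᶠ μ in nhdsWithin 1 (Set.Iio 1), Acoef k μ ≠ 0) :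
    Filter.Tendsto (fun μ : ℝ => (μ ^ 2 - 1) ^ 2 * tauCoef k μ)
      (nhdsWithin 1 (Set.Iio 1)) (nhds (4 / (2 * (k : ℝ) - 1) ^ 2)) :=
  stmt4_general k hk
end

section
/- Let a ∈ ℝ and i, j ∈ ℕ. Then ∫ He_i(z) · He_j(a·z) dγ(z) = j! · a^i · ((a² − 1)/2)^{(j−i)/2} / ((j−i)/2)! whenever j ≥ i and j − i is even, and ∫ He_i(z) · He_j(a·z) dγ(z) = 0 otherwise (i.e., when j < i or j − i is odd). -/
/-!
Gaussian integration by parts, `∫ x p(x) dγ = ∫ p' dγ`, and the recursion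
`He_{n+1} = X He_n - He_n'` make multiplication by `He_{n+1}` adjoint to differentiation,
so `∫ He_i q dγ = ∫ q^{(i)} dγ`. As `He_j' = j He_{j-1}`, for `q = He_j(a·)` this equals
`a^i j!/(j-i)! ∫ He_{j-i}(a·) dγ`, and `0` when `i > j`. The same two facts give
`∫ He_{m+2}(a·) dγ = (a² - 1)(m + 1) ∫ He_m(a·) dγ`, whence the closed form.
-/

open MeasureTheory ProbabilityTheory

/-- The `n`-th probabilists' Hermite polynomial, as a real function. -/
noncomputable def He (n : ℕ) (x : ℝ) : ℝ :=
  Polynomial.aeval x (Polynomial.hermite n)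

open Polynomial
open scoped NNReal

namespace Polynomial

theorem derivative_hermite_succ (n : ℕ) :
    derivative (hermite (n + 1)) = ((n + 1 : ℕ) : ℤ[X]) * hermite n := by
  induction n with
  | zero => simp
  | succ n ih =>
    rw [hermite_succ (n + 1), derivative_sub, derivative_mul, derivative_X, one_mul, ih,
      derivative_mul, hermite_succ n]
    simp only [derivative_natCast, zero_mul, zero_add]
    push_cast
    ring

theorem iterate_derivative_hermite (n k : ℕ) :
    derivative^[k] (hermite n) = (n.descFactorial k : ℤ[X]) * hermite (n - k) := by
  induction k with
  | zero => simp
  | succ k ih =>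
    rw [Function.iterate_succ_apply', ih, derivative_mul, derivative_natCast, zero_mul, zero_add,
      Nat.descFactorial_succ]
    cases hnk : n - k with
    | zero => simp [hermite_zero]
    | succ m =>
      rw [derivative_hermite_succ, show n - (k + 1) = m by omega]
      push_cast
      ring

theorem iterate_derivative_comp_C_mul_X {R : Type*} [CommSemiring R] (p : R[X]) (a : R) (k : ℕ) :
    derivative^[k] (p.comp (C a * X)) = a ^ k • (derivative^[k] p).comp (C a * X) := by
  induction k with
  | zero => simp
  | succ k ih =>
    rw [Function.iterate_succ_apply', ih, derivative_smul, derivative_comp, derivative_C_mul_X,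
      Function.iterate_succ_apply', pow_succ, mul_smul, smul_eq_C_mul a]

end Polynomial

namespace ProbabilityTheory

variable {μ : ℝ} {v : ℝ≥0}

lemma integrable_eval_gaussianReal (p : ℝ[X]) :
    Integrable (fun x ↦ p.eval x) (gaussianReal μ v) := by
  simp_rw [eval_eq_sum_range]
  refine integrable_finsetSum _ fun k _ ↦ Integrable.const_mul ?_ _
  exact integrable_pow_of_mem_interior_integrableExpSet (by simp) k

lemma integrable_gaussianPDFReal_smul_iff {E : Type*} [NormedAddCommGroup E] [NormedSpace ℝ E]
    {f : ℝ → E} (hv : v ≠ 0) :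
    Integrable (fun x ↦ gaussianPDFReal μ v x • f x) ↔ Integrable f (gaussianReal μ v) := by
  rw [gaussianReal_of_var_ne_zero _ hv, integrable_withDensity_iff_integrable_smul'
    (measurable_gaussianPDF μ v) (ae_of_all _ fun _ ↦ gaussianPDF_lt_top)]
  simp_rw [toReal_gaussianPDF]

lemma hasDerivAt_gaussianPDFReal (x : ℝ) :
    HasDerivAt (gaussianPDFReal μ v) (-((x - μ) / v) * gaussianPDFReal μ v x) x := by
  have h : HasDerivAt (fun x ↦ -(x - μ) ^ 2 / (2 * v)) (-(2 * (x - μ)) / (2 * v)) x := by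
    simpa using (((hasDerivAt_id x).sub_const μ).pow 2).neg.div_const (2 * (v : ℝ))
  rw [gaussianPDFReal_def]
  exact (h.exp.const_mul _).congr_deriv (by ring)

noncomputable def gaussianRealPolyIntegral (μ : ℝ) (v : ℝ≥0) : ℝ[X] →ₗ[ℝ] ℝ where
  toFun p := ∫ x, p.eval x ∂gaussianReal μ v
  map_add' p q := by
    simp_rw [eval_add]
    exact integral_add (integrable_eval_gaussianReal p) (integrable_eval_gaussianReal q)
  map_smul' c p := by
    simp_rw [eval_smul, smul_eq_mul]
    exact integral_const_mul c _

lemma gaussianRealPolyIntegral_apply (p : ℝ[X]) :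
    gaussianRealPolyIntegral μ v p = ∫ x, p.eval x ∂gaussianReal μ v := rfl

lemma gaussianRealPolyIntegral_one : gaussianRealPolyIntegral μ v 1 = 1 := by
  simp [gaussianRealPolyIntegral_apply]

theorem gaussianRealPolyIntegral_X_sub_C_mul (p : ℝ[X]) :
    gaussianRealPolyIntegral μ v ((X - C μ) * p) =
      v * gaussianRealPolyIntegral μ v (derivative p) := by
  rcases eq_or_ne v 0 with rfl | hv
  · simp [gaussianRealPolyIntegral_apply]
  set q := C (v : ℝ) * derivative p - (X - C μ) * p
  have hderiv (x : ℝ) : HasDerivAt (fun x ↦ gaussianPDFReal μ v x * p.eval x)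
      ((v : ℝ)⁻¹ • (gaussianPDFReal μ v x • q.eval x)) x := by
    refine ((hasDerivAt_gaussianPDFReal x).mul (p.hasDerivAt x)).congr_deriv ?_
    simp only [q, eval_sub, eval_mul, eval_X, eval_C, smul_eq_mul]
    field_simp
    ring
  have h := integral_eq_zero_of_hasDerivAt_of_integrable hderiv
    (((integrable_gaussianPDFReal_smul_iff (μ := μ) hv).2
      (integrable_eval_gaussianReal q)).smul (v : ℝ)⁻¹)
    ((integrable_gaussianPDFReal_smul_iff hv).2 (integrable_eval_gaussianReal p))
  rw [integral_smul, ← integral_gaussianReal_eq_integral_smul hv, smul_eq_zero,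
    or_iff_right (by simpa using hv), ← gaussianRealPolyIntegral_apply, map_sub, C_mul',
    map_smul, sub_eq_zero] at h
  exact h.symm

end ProbabilityTheory

noncomputable def realHermite (n : ℕ) : ℝ[X] :=
  (hermite n).map (algebraMap ℤ ℝ)

lemma He_eq_eval_realHermite (n : ℕ) (x : ℝ) : He n x = (realHermite n).eval x :=
  (eval_map_algebraMap _ _).symm

lemma realHermite_succ (n : ℕ) :
    realHermite (n + 1) = X * realHermite n - derivative (realHermite n) := by
  rw [realHermite, hermite_succ, Polynomial.map_sub, Polynomial.map_mul, map_X, ← derivative_map,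
    realHermite]

lemma iterate_derivative_realHermite (n k : ℕ) :
    derivative^[k] (realHermite n) = (n.descFactorial k : ℝ) • realHermite (n - k) := by
  rw [realHermite, iterate_derivative_map, iterate_derivative_hermite, Polynomial.map_mul,
    Polynomial.map_natCast, ← C_eq_natCast, ← smul_eq_C_mul, realHermite]

local notation "𝔼" => ProbabilityTheory.gaussianRealPolyIntegral 0 1

lemma gaussianRealPolyIntegral_X_mul (p : ℝ[X]) : 𝔼 (X * p) = 𝔼 (derivative p) := by
  simpa using gaussianRealPolyIntegral_X_sub_C_mul (μ := 0) (v := 1) p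

lemma gaussianRealPolyIntegral_realHermite_succ_mul (n : ℕ) (q : ℝ[X]) :
    𝔼 (realHermite (n + 1) * q) = 𝔼 (realHermite n * derivative q) := by
  rw [realHermite_succ, sub_mul, map_sub, mul_assoc, gaussianRealPolyIntegral_X_mul,
    derivative_mul, map_add, add_sub_cancel_left]

lemma gaussianRealPolyIntegral_realHermite_mul (n : ℕ) (q : ℝ[X]) :
    𝔼 (realHermite n * q) = 𝔼 (derivative^[n] q) := by
  induction n generalizing q with
  | zero => simp [realHermite]
  | succ n ih =>
    rw [gaussianRealPolyIntegral_realHermite_succ_mul, ih, Function.iterate_succ_apply]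

lemma gaussianRealPolyIntegral_realHermite_comp_succ_succ (a : ℝ) (m : ℕ) :
    𝔼 ((realHermite (m + 2)).comp (C a * X)) =
      (a ^ 2 - 1) * (m + 1) * 𝔼 ((realHermite m).comp (C a * X)) := by
  have h := iterate_derivative_realHermite (m + 1) 1
  simp only [Function.iterate_one, Nat.descFactorial_one, add_tsub_cancel_right] at h
  rw [realHermite_succ, sub_comp, mul_comp, X_comp, mul_assoc, ← smul_eq_C_mul, map_sub, map_smul,
    gaussianRealPolyIntegral_X_mul, derivative_comp, derivative_C_mul_X, h, smul_comp,
    ← smul_eq_C_mul]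
  simp only [map_smul, smul_eq_mul]
  push_cast
  ring

lemma gaussianRealPolyIntegral_realHermite_comp_odd (a : ℝ) (k : ℕ) :
    𝔼 ((realHermite (2 * k + 1)).comp (C a * X)) = 0 := by
  induction k with
  | zero =>
    rw [realHermite, hermite_one, map_X, X_comp, gaussianRealPolyIntegral_apply]
    simp only [eval_mul, eval_C, eval_X]
    rw [integral_const_mul, integral_id_gaussianReal, mul_zero]
  | succ k ih =>
    rw [show 2 * (k + 1) + 1 = 2 * k + 1 + 2 by ring,
      gaussianRealPolyIntegral_realHermite_comp_succ_succ, ih, mul_zero]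

lemma gaussianRealPolyIntegral_realHermite_comp_even (a : ℝ) (k : ℕ) :
    𝔼 ((realHermite (2 * k)).comp (C a * X)) =
      (2 * k).factorial / k.factorial * ((a ^ 2 - 1) / 2) ^ k := by
  induction k with
  | zero => simp [realHermite, gaussianRealPolyIntegral_one]
  | succ k ih =>
    rw [show 2 * (k + 1) = 2 * k + 2 by ring,
      gaussianRealPolyIntegral_realHermite_comp_succ_succ, ih, Nat.factorial_succ (2 * k + 1),
      Nat.factorial_succ (2 * k), Nat.factorial_succ k]
    push_cast
    field_simp
    ring

lemma gaussianRealPolyIntegral_realHermite_mul_comp (a : ℝ) (i j : ℕ) :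
    𝔼 (realHermite i * (realHermite j).comp (C a * X)) =
      a ^ i * j.descFactorial i * 𝔼 ((realHermite (j - i)).comp (C a * X)) := by
  rw [gaussianRealPolyIntegral_realHermite_mul, iterate_derivative_comp_C_mul_X,
    iterate_derivative_realHermite, smul_comp, map_smul, map_smul, smul_eq_mul, smul_eq_mul,
    mul_assoc]

/-- Hermite coefficients of a scaled Hermite polynomial:
`∫ He_i(z)·He_j(a·z) dγ(z) = j!·a^i·((a²−1)/2)^{(j−i)/2}/((j−i)/2)!` when
`j ≥ i` and `j − i` is even, and `0` otherwise. -/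
theorem stmt14 (a : ℝ) (i j : ℕ) :
    (∫ z, He i z * He j (a * z) ∂(gaussianReal 0 1))
      = if i ≤ j ∧ Even (j - i) then
          (j.factorial : ℝ) * a ^ i * ((a ^ 2 - 1) / 2) ^ ((j - i) / 2) /
            (((j - i) / 2).factorial : ℝ)
        else 0 := by
  have hint (z : ℝ) :
      He i z * He j (a * z) = (realHermite i * (realHermite j).comp (C a * X)).eval z := by
    simp [He_eq_eval_realHermite]
  simp_rw [hint, ← gaussianRealPolyIntegral_apply, gaussianRealPolyIntegral_realHermite_mul_comp]
  split_ifs with h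
  · obtain ⟨hij, k, hk⟩ := h
    rw [hk, ← two_mul, gaussianRealPolyIntegral_realHermite_comp_even,
      Nat.mul_div_cancel_left _ two_pos, ← Nat.factorial_mul_descFactorial hij, hk, ← two_mul]
    push_cast
    field_simp
  · rcases not_and_or.1 h with hij | hodd
    · simp [Nat.descFactorial_eq_zero_iff_lt.2 (not_le.1 hij)]
    · obtain ⟨k, hk⟩ := Nat.not_even_iff_odd.1 hodd
      rw [hk, gaussianRealPolyIntegral_realHermite_comp_odd, mul_zero]
end

section
/- For every k ∈ ℕ, the square of the k-th probabilists' Hermite polynomial satisfies (He_k)² = Σ_{j=0}^{k} j! · C(k, j)² · He_{2k−2j}, where C(k, j) is the binomial coefficient; equivalently, He_k(z)² = Σ_{j=0}^{k} j!·C(k,j)²·He_{2k−2j}(z) for all z ∈ ℝ. In particular, besides the constant term k!·He_0, the lowest-order Hermite polynomial appearing in (He_k)² is k²·(k−1)!·He_2, so the information exponent of z ↦ He_k(z)² is at most 2. -/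
open Polynomial in
lemma derivHermite : ∀ n : ℕ, derivative (hermite n) = (n : Polynomial ℤ) * hermite (n - 1)
  | 0 => by simp [hermite_zero]
  | 1 => by simp [hermite_one, hermite_zero]
  | (n+2) => by
    have r1 := derivHermite (n+1)
    have r0 := derivHermite n
    simp only [Nat.add_sub_cancel] at r1
    have e2 : hermite (n+2) = X * hermite (n+1) - ((n : Polynomial ℤ)+1) * hermite n := by
      rw [hermite_succ (n+1), r1]; push_cast; ring
    have e1 : hermite (n+1) = X * hermite n - (n : Polynomial ℤ) * hermite (n-1) :=
      by rw [hermite_succ n, r0]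
    rw [show n+2-1 = n+1 from rfl, e2, derivative_sub, derivative_mul, derivative_X, r1,
      derivative_mul, r0, e1]
    simp only [derivative_add, derivative_one, derivative_natCast, add_zero, zero_mul, zero_add]
    push_cast
    ring

lemma He_zero (z : ℝ) : He 0 z = 1 := by simp [He, Polynomial.hermite_zero]

lemma He_succ (n : ℕ) (z : ℝ) : He (n+1) z = z * He n z - n * He (n-1) z := by
  unfold He
  rw [Polynomial.hermite_succ, derivHermite]
  simp

lemma z_mul_He (r : ℕ) (z : ℝ) : z * He r z = He (r+1) z + r * He (r-1) z := by
  rw [He_succ]; ring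

lemma coeff_key (m n j : ℕ) (hj : j ≤ n+1) (hm : n+2 ≤ m) :
    (((j+1).factorial : ℝ)) * (m.choose (j+1) : ℝ) * ((n+2).choose (j+1) : ℝ)
      = ((j+1).factorial : ℝ) * (m.choose (j+1) : ℝ) * ((n+1).choose (j+1) : ℝ)
        + ((j.factorial : ℝ) * (m.choose j : ℝ) * ((n+1).choose j : ℝ)) * ((m:ℝ)+(n:ℝ)+1-2*j)
        - ((n:ℝ)+1) * ((j.factorial : ℝ) * (m.choose j : ℝ) * (n.choose j : ℝ)) := by
  have hjm : j ≤ m := by omega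
  have h1 : (m.choose (j+1) : ℝ) * ((j:ℝ)+1) = (m.choose j : ℝ) * ((m:ℝ) - j) := by
    have h := Nat.choose_succ_right_eq m j
    have h' : ((m.choose (j+1) * (j+1) : ℕ) : ℝ) = ((m.choose j * (m - j) : ℕ) : ℝ) :=
      congrArg (Nat.cast (R := ℝ)) h
    rw [Nat.cast_mul, Nat.cast_mul, Nat.cast_sub hjm] at h'
    push_cast at h' ⊢
    linarith
  have h2 : (n.choose j : ℝ) * ((n:ℝ)+1) = ((n+1).choose j : ℝ) * ((n:ℝ)+1-(j:ℝ)) := by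
    have h := Nat.choose_mul_succ_eq n j
    have h' : ((n.choose j * (n+1) : ℕ) : ℝ) = (((n+1).choose j * (n+1-j) : ℕ) : ℝ) :=
      congrArg (Nat.cast (R := ℝ)) h
    rw [Nat.cast_mul, Nat.cast_mul, Nat.cast_sub hj] at h'
    push_cast at h' ⊢
    linarith
  have h3 : (((n+2).choose (j+1) : ℕ) : ℝ) = ((n+1).choose j : ℝ) + ((n+1).choose (j+1) : ℝ) := by
    exact_mod_cast congrArg (Nat.cast (R := ℝ)) (Nat.choose_succ_succ (n+1) j)
  have hfac : (((j+1).factorial : ℕ) : ℝ) = ((j:ℝ)+1) * (j.factorial : ℝ) := by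
    rw [Nat.factorial_succ]; push_cast; ring
  rw [h3, hfac]
  linear_combination ((j.factorial : ℝ) * ((n+1).choose j : ℝ)) * h1
    + ((j.factorial : ℝ) * (m.choose j : ℝ)) * h2

lemma He_mul : ∀ (n m : ℕ), n ≤ m → ∀ z : ℝ,
    He m z * He n z = ∑ j ∈ Finset.range (n+1),
      (j.factorial : ℝ) * (m.choose j : ℝ) * (n.choose j : ℝ) * He (m + n - 2*j) z
  | 0, m, _, z => by simp [He_zero]
  | 1, m, hm, z => by
    have h1 : He 1 z = z := by simp [He, Polynomial.hermite_one]
    rw [Finset.sum_range_succ, Finset.sum_range_succ, Finset.sum_range_zero, h1,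
      show m + 1 - 2*0 = m+1 by omega, show m + 1 - 2*1 = m-1 by omega]
    simp only [Nat.factorial_zero, Nat.factorial_one, Nat.choose_zero_right,
      Nat.choose_one_right, Nat.choose_self, Nat.cast_one, zero_add, one_mul, mul_one]
    rw [mul_comm, z_mul_He m z]
  | (n+2), m, hm, z => by
    have hsucc : He (n+2) z = z * He (n+1) z - ((n:ℝ)+1) * He n z := by
      have h := He_succ (n+1) z
      rw [Nat.add_sub_cancel] at h
      push_cast at h
      exact h
    have IH1 := He_mul (n+1) m (by omega) z
    have IH0 := He_mul n m (by omega) z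
    calc He m z * He (n+2) z
        = z * (He m z * He (n+1) z) - ((n:ℝ)+1) * (He m z * He n z) := by
          rw [hsucc]; ring
      _ = (∑ j ∈ Finset.range (n+2),
            ((j.factorial : ℝ) * (m.choose j : ℝ) * ((n+1).choose j : ℝ))
              * (z * He (m + (n+1) - 2*j) z))
          - ∑ j ∈ Finset.range (n+1),
            (((n:ℝ)+1) * ((j.factorial : ℝ) * (m.choose j : ℝ) * (n.choose j : ℝ)))
              * He (m + n - 2*j) z := by
          rw [IH1, IH0, Finset.mul_sum, Finset.mul_sum]
          congr 1
          · exact Finset.sum_congr rfl (fun j _ => by ring)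
          · exact Finset.sum_congr rfl (fun j _ => by ring)
      _ = (∑ j ∈ Finset.range (n+2),
            (((j.factorial : ℝ) * (m.choose j : ℝ) * ((n+1).choose j : ℝ))
                * He (m + n + 2 - 2*j) z
              + (((j.factorial : ℝ) * (m.choose j : ℝ) * ((n+1).choose j : ℝ))
                  * ((m:ℝ)+(n:ℝ)+1-2*j)) * He (m + n - 2*j) z))
          - ∑ j ∈ Finset.range (n+2),
            (((n:ℝ)+1) * ((j.factorial : ℝ) * (m.choose j : ℝ) * (n.choose j : ℝ)))
              * He (m + n - 2*j) z := by
          congr 1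
          · refine Finset.sum_congr rfl (fun j hj => ?_)
            have hj' : j < n + 2 := Finset.mem_range.mp hj
            have hz := z_mul_He (m + (n+1) - 2*j) z
            rw [show m + (n+1) - 2*j + 1 = m + n + 2 - 2*j by omega,
              show m + (n+1) - 2*j - 1 = m + n - 2*j by omega] at hz
            have hcast : ((m + (n+1) - 2*j : ℕ) : ℝ) = (m:ℝ)+(n:ℝ)+1-2*(j:ℝ) := by
              rw [Nat.cast_sub (by omega)]; push_cast; ring
            rw [hz, hcast]; ring
          · symm
            rw [Finset.sum_range_succ, Nat.choose_succ_self]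
            simp
      _ = (∑ j ∈ Finset.range (n+2),
            ((j.factorial : ℝ) * (m.choose j : ℝ) * ((n+1).choose j : ℝ))
              * He (m + n + 2 - 2*j) z)
          + ∑ j ∈ Finset.range (n+2),
            ((((j.factorial : ℝ) * (m.choose j : ℝ) * ((n+1).choose j : ℝ))
                * ((m:ℝ)+(n:ℝ)+1-2*j))
              - ((n:ℝ)+1) * ((j.factorial : ℝ) * (m.choose j : ℝ) * (n.choose j : ℝ)))
              * He (m + n - 2*j) z := by
          rw [Finset.sum_add_distrib, add_sub_assoc, ← Finset.sum_sub_distrib]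
          congr 1
          exact Finset.sum_congr rfl (fun j _ => by ring)
      _ = ∑ j ∈ Finset.range (n+2+1),
            (j.factorial : ℝ) * (m.choose j : ℝ) * ((n+2).choose j : ℝ)
              * He (m + (n+2) - 2*j) z := by
          rw [Finset.sum_range_succ' _ (n+2), Finset.sum_range_succ' _ (n+1)]
          have hext : (∑ j ∈ Finset.range (n+1),
              ((j+1).factorial : ℝ) * (m.choose (j+1) : ℝ) * ((n+1).choose (j+1) : ℝ)
                * He (m + n + 2 - 2*(j+1)) z)
              = ∑ j ∈ Finset.range (n+2),
              ((j+1).factorial : ℝ) * (m.choose (j+1) : ℝ) * ((n+1).choose (j+1) : ℝ)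
                * He (m + n + 2 - 2*(j+1)) z := by
            symm
            rw [Finset.sum_range_succ,
              show (n+1).choose (n+1+1) = 0 from Nat.choose_succ_self (n+1)]
            simp
          rw [hext, add_right_comm, ← Finset.sum_add_distrib]
          congr 1
          · refine Finset.sum_congr rfl (fun j hj => ?_)
            have hj' : j < n + 2 := Finset.mem_range.mp hj
            rw [show m + (n+2) - 2*(j+1) = m + n - 2*j by omega,
              show m + n + 2 - 2*(j+1) = m + n - 2*j by omega,
              coeff_key m n j (by omega) hm]
            ring

/-- Squaring a pure Hermite polynomial:
`He_k(z)² = Σ_{j=0}^{k} j!·C(k,j)²·He_{2k−2j}(z)`. In particular, besides the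
constant term `k!·He_0` (the `j = k` term), the lowest-order Hermite polynomial
appearing is `He_2`, with coefficient `(k−1)!·C(k,k−1)² = k²·(k−1)!` (the
`j = k−1` term), so the information exponent of `He_k²` is at most `2`. -/
theorem stmt16 (k : ℕ) (z : ℝ) :
    ((He k z) ^ 2 = ∑ j ∈ Finset.range (k + 1),
        (j.factorial : ℝ) * ((k.choose j : ℝ)) ^ 2 * He (2 * k - 2 * j) z) ∧
    (k.factorial : ℝ) * ((k.choose k : ℝ)) ^ 2 = (k.factorial : ℝ) ∧
    (1 ≤ k →
      2 * k - 2 * (k - 1) = 2 ∧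
      ((k - 1).factorial : ℝ) * ((k.choose (k - 1) : ℝ)) ^ 2 =
        (k : ℝ) ^ 2 * ((k - 1).factorial : ℝ)) := by
  refine ⟨?_, by simp, fun hk => ⟨by omega, ?_⟩⟩
  · have h := He_mul k k le_rfl z
    rw [sq, h]
    refine Finset.sum_congr rfl (fun j hj => ?_)
    rw [show k + k - 2*j = 2*k - 2*j by omega]
    ring
  · have hc : k.choose (k-1) = k := by
      obtain ⟨m, rfl⟩ : ∃ m, k = m+1 := ⟨k-1, by omega⟩
      simp [Nat.choose_succ_self_right]
    rw [hc]
    ring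
end
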